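/- arXiv:2207.02505 — 3 statements merged into one kernel-verified Lean document; each statement's English description precedes it below -/
import Mathlib

section
/- Let μ be an order-(l+k) equivalence class, and let γ^l, γ^k be the equivalence classes of i¹ ∈ [n]^l and j¹ ∈ [n]^k respectively, for some fixed (i¹, j¹) ∈ μ. Then for any i ∈ [n]^l, j ∈ [n]^k, (i,j) ∈ μ holds if and only if both: (1) i ∈ γ^l and j ∈ γ^k, and (2) for all a ∈ [l], b ∈ [k], and all (i², j²) ∈ μ, i_a = j_b ⟺ i²_a = j²_b. -/
/-- Entrywise permutation relation on multi-indices `[n]^m`. -/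
def multiIndexRel (n m : ℕ) (i j : Fin m → Fin n) : Prop :=
  ∃ π : Equiv.Perm (Fin n), ∀ a : Fin m, i a = π (j a)

/-- Breakdown of the membership test `(i,j) ∈ μ` for an order-`(l+k)`
equivalence class `μ` with representative `(i¹, j¹) ∈ μ`: `(i,j) ∈ μ` iff
(1) `i` is in the class `γ^l` of `i¹` and `j` is in the class `γ^k` of `j¹`, and
(2) the cross equality pattern of `(i,j)` matches that of every `(i²,j²) ∈ μ`. -/
theorem mem_class_iff_breakdown (n l k : ℕ)
    (μ : Set (Fin (l + k) → Fin n))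
    (i₁ : Fin l → Fin n) (j₁ : Fin k → Fin n)
    (hμ : μ = {y | multiIndexRel n (l + k) (Fin.append i₁ j₁) y})
    (i : Fin l → Fin n) (j : Fin k → Fin n) :
    Fin.append i j ∈ μ ↔
      ((multiIndexRel n l i₁ i ∧ multiIndexRel n k j₁ j) ∧
        (∀ (a : Fin l) (b : Fin k) (i₂ : Fin l → Fin n) (j₂ : Fin k → Fin n),
          Fin.append i₂ j₂ ∈ μ → (i a = j b ↔ i₂ a = j₂ b))) := by
  classical
  subst hμ
  constructor
  · rintro ⟨π, hπ⟩
    have hi : ∀ a, i₁ a = π (i a) := fun a => by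
      have := hπ (Fin.castAdd k a); simpa [Fin.append_left] using this
    have hj : ∀ b, j₁ b = π (j b) := fun b => by
      have := hπ (Fin.natAdd l b); simpa [Fin.append_right] using this
    refine ⟨⟨⟨π, hi⟩, ⟨π, hj⟩⟩, ?_⟩
    rintro a b i₂ j₂ ⟨π₂, hπ₂⟩
    have hi₂ : i₁ a = π₂ (i₂ a) := by
      have := hπ₂ (Fin.castAdd k a); simpa [Fin.append_left] using this
    have hj₂ : j₁ b = π₂ (j₂ b) := by
      have := hπ₂ (Fin.natAdd l b); simpa [Fin.append_right] using this
    constructor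
    · intro h; apply π₂.injective; rw [← hi₂, ← hj₂, hi a, hj b, h]
    · intro h; apply π.injective; rw [← hi a, ← hj b, hi₂, hj₂, h]
  · rintro ⟨⟨⟨πi, hπi⟩, ⟨πj, hπj⟩⟩, h2⟩
    have hmem : Fin.append i₁ j₁ ∈ {y | multiIndexRel n (l+k) (Fin.append i₁ j₁) y} :=
      ⟨Equiv.refl _, fun a => rfl⟩
    have hcross : ∀ a b, i a = j b ↔ i₁ a = j₁ b := fun a b => h2 a b i₁ j₁ hmem
    set f : Fin n → Fin n := fun x => if x ∈ Set.range j then πj x else πi x with hf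
    have hfj : ∀ b, f (j b) = j₁ b := fun b => by
      simp only [hf, if_pos (Set.mem_range_self b)]
      exact (hπj b).symm
    have hfi : ∀ a, f (i a) = i₁ a := fun a => by
      by_cases h : i a ∈ Set.range j
      · obtain ⟨b, hb⟩ := h
        have : i a = j b := hb.symm
        rw [this, hfj b]
        exact ((hcross a b).mp this).symm
      · simp only [hf, if_neg h]
        exact (hπi a).symm
    set S : Set (Fin n) := Set.range i ∪ Set.range j with hS
    have hinj : Set.InjOn f S := by
      rintro x (⟨a, rfl⟩ | ⟨b, rfl⟩) y (⟨a', rfl⟩ | ⟨b', rfl⟩) hxy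
      · by_cases hx : i a ∈ Set.range j <;> by_cases hy : i a' ∈ Set.range j
        · obtain ⟨b, hb⟩ := hx; obtain ⟨b', hb'⟩ := hy
          rw [← hb, ← hb'] at hxy ⊢
          exact πj.injective (by simpa [hf] using hxy)
        · rw [hfi a, hfi a'] at hxy
          obtain ⟨b, hb⟩ := hx
          have h1 : i a' = j b := (hcross a' b).mpr (by rw [← hxy]; exact (hcross a b).mp hb.symm)
          exact absurd ⟨b, h1.symm⟩ hy
        · rw [hfi a, hfi a'] at hxy
          obtain ⟨b, hb⟩ := hy
          have h1 : i a = j b := (hcross a b).mpr (by rw [hxy]; exact (hcross a' b).mp hb.symm)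
          exact absurd ⟨b, h1.symm⟩ hx
        · rw [hfi a, hfi a'] at hxy
          exact πi.injective (by rw [← hπi a, ← hπi a']; exact hxy)
      · rw [hfi a, hfj b'] at hxy
        exact (hcross a b').mpr hxy
      · rw [hfj b, hfi a'] at hxy
        exact ((hcross a' b).mpr hxy.symm).symm
      · rw [hfj b, hfj b'] at hxy
        exact πj.injective (by rw [← hπj b, ← hπj b']; exact hxy)
    let e := Equiv.Set.imageOfInjOn f S hinj
    refine ⟨e.extendSubtype, fun c => ?_⟩
    have key : ∀ x (hx : x ∈ S), e.extendSubtype x = f x := fun x hx => by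
      rw [Equiv.extendSubtype_apply_of_mem e x hx]; rfl
    refine Fin.addCases (fun a => ?_) (fun b => ?_) c
    · rw [Fin.append_left, Fin.append_left, key (i a) (Or.inl ⟨a, rfl⟩), hfi]
    · rw [Fin.append_right, Fin.append_right, key (j b) (Or.inr ⟨b, rfl⟩), hfj]
end

section
/- Define the scoring function δ(i, j; μ, ε) = [1 if i ∈ γ^l else 1-ε] + [1 if j ∈ γ^k else 1-ε] + Σ_{a∈[l]} Σ_{b∈[k]} sgn(a,b)·𝟙[i_a = j_b], where γ^l, γ^k are the equivalence classes of the left and right parts of elements of μ, and sgn(a,b) = +1 if i²_a = j²_b for all (i²,j²) ∈ μ, and -1 otherwise. Then for any ε > 0, δ(i, j; μ, ε) attains its maximum possible value over all (i, j) ∈ [n]^l × [n]^k exactly on the set {(i,j) : (i,j) ∈ μ}, provided μ is nonempty. -/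
open Classical

lemma exists_perm_extend {n : ℕ} (S : Set (Fin n)) (h : Fin n → Fin n)
    (hinj : Set.InjOn h S) : ∃ π : Equiv.Perm (Fin n), ∀ x ∈ S, π x = h x := by
  classical
  let e : S ≃ (h '' S) := Equiv.Set.imageOfInjOn h S hinj
  have hcard : Fintype.card ↥(Sᶜ) = Fintype.card ↥((h '' S)ᶜ) := by
    rw [Fintype.card_compl_set, Fintype.card_compl_set, Fintype.card_congr e]
  let e' : ↥(Sᶜ) ≃ ↥((h '' S)ᶜ) := Fintype.equivOfCardEq hcard
  refine ⟨((Equiv.Set.sumCompl S).symm.trans ((e.sumCongr e').trans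
    (Equiv.Set.sumCompl (h '' S)))), ?_⟩
  intro x hx
  simp only [Equiv.trans_apply, Equiv.Set.sumCompl_symm_apply_of_mem hx, Equiv.sumCongr_apply,
    Sum.map_inl, Equiv.Set.sumCompl_apply_inl]
  rfl


/-- Sign function of an equivalence class `μ`: `+1` if `i²_a = j²_b` for all
`(i², j²) ∈ μ`, and `-1` otherwise. -/
noncomputable def sgn (n l k : ℕ) (μ : Set (Fin (l + k) → Fin n))
    (a : Fin l) (b : Fin k) : ℝ :=
  if ∀ (i₂ : Fin l → Fin n) (j₂ : Fin k → Fin n),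
      Fin.append i₂ j₂ ∈ μ → i₂ a = j₂ b then 1 else -1

/-- The scoring function `δ(i, j; μ, ε)`, where `γ^l`, `γ^k` are the
equivalence classes of the left and right parts `i₁`, `j₁` of a fixed element
of `μ`. -/
noncomputable def score (n l k : ℕ) (μ : Set (Fin (l + k) → Fin n))
    (i₁ : Fin l → Fin n) (j₁ : Fin k → Fin n) (ε : ℝ)
    (i : Fin l → Fin n) (j : Fin k → Fin n) : ℝ :=
  (if multiIndexRel n l i₁ i then 1 else 1 - ε) +
  (if multiIndexRel n k j₁ j then 1 else 1 - ε) +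
  ∑ a : Fin l, ∑ b : Fin k,
    sgn n l k μ a b * (if i a = j b then (1 : ℝ) else 0)

/-- For any `ε > 0`, the scoring function attains its maximum possible value
over `[n]^l × [n]^k` exactly on `{(i,j) : (i,j) ∈ μ}`. -/
theorem score_max_iff_mem (n l k : ℕ)
    (μ : Set (Fin (l + k) → Fin n))
    (i₁ : Fin l → Fin n) (j₁ : Fin k → Fin n)
    (hμ : μ = {y | multiIndexRel n (l + k) (Fin.append i₁ j₁) y})
    (ε : ℝ) (hε : 0 < ε) :
    ∃ Mx : ℝ,
      (∀ (i : Fin l → Fin n) (j : Fin k → Fin n),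
        score n l k μ i₁ j₁ ε i j ≤ Mx) ∧
      (∀ (i : Fin l → Fin n) (j : Fin k → Fin n),
        score n l k μ i₁ j₁ ε i j = Mx ↔ Fin.append i j ∈ μ) := by
  classical
  have hmem₁ : Fin.append i₁ j₁ ∈ μ := by
    rw [hμ]; exact ⟨Equiv.refl _, fun c => rfl⟩
  have hsgn : ∀ a b, sgn n l k μ a b = if i₁ a = j₁ b then (1:ℝ) else -1 := by
    intro a b
    unfold sgn
    by_cases hP : ∀ (i₂ : Fin l → Fin n) (j₂ : Fin k → Fin n),
        Fin.append i₂ j₂ ∈ μ → i₂ a = j₂ b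
    · rw [if_pos hP, if_pos (hP i₁ j₁ hmem₁)]
    · rw [if_neg hP, if_neg]
      intro hab
      apply hP
      intro i₂ j₂ hm
      rw [hμ] at hm
      obtain ⟨π, hπ⟩ := hm
      have h1 := hπ (Fin.castAdd k a)
      have h2 := hπ (Fin.natAdd l b)
      rw [Fin.append_left, Fin.append_left] at h1
      rw [Fin.append_right, Fin.append_right] at h2
      exact π.injective (by rw [← h1, ← h2, hab])
  -- per-term bound
  have hterm_le : ∀ (i : Fin l → Fin n) (j : Fin k → Fin n) (p : Fin l × Fin k),
      sgn n l k μ p.1 p.2 * (if i p.1 = j p.2 then (1:ℝ) else 0)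
        ≤ (if i₁ p.1 = j₁ p.2 then (1:ℝ) else 0) := by
    intro i j p
    rw [hsgn]
    by_cases h1 : i₁ p.1 = j₁ p.2 <;> by_cases h2 : i p.1 = j p.2 <;>
      simp [h1, h2]
  have hterm_eq : ∀ (i : Fin l → Fin n) (j : Fin k → Fin n) (p : Fin l × Fin k),
      sgn n l k μ p.1 p.2 * (if i p.1 = j p.2 then (1:ℝ) else 0)
        = (if i₁ p.1 = j₁ p.2 then (1:ℝ) else 0) ↔ (i p.1 = j p.2 ↔ i₁ p.1 = j₁ p.2) := by
    intro i j p
    rw [hsgn]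
    by_cases h1 : i₁ p.1 = j₁ p.2 <;> by_cases h2 : i p.1 = j p.2 <;>
      simp [h1, h2]
  set N : ℝ := ∑ p : Fin l × Fin k, (if i₁ p.1 = j₁ p.2 then (1:ℝ) else 0) with hN
  have hsum_rw : ∀ (i : Fin l → Fin n) (j : Fin k → Fin n),
      (∑ a : Fin l, ∑ b : Fin k, sgn n l k μ a b * (if i a = j b then (1:ℝ) else 0))
        = ∑ p : Fin l × Fin k, sgn n l k μ p.1 p.2 * (if i p.1 = j p.2 then (1:ℝ) else 0) := by
    intro i j; rw [Fintype.sum_prod_type]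
  have hA_le : ∀ (P : Prop), (if P then (1:ℝ) else 1 - ε) ≤ 1 := by
    intro P; split <;> linarith
  have hA_eq : ∀ (P : Prop), ((if P then (1:ℝ) else 1 - ε) = 1 ↔ P) := by
    intro P; split <;> simp_all <;> linarith
  refine ⟨1 + 1 + N, ?_, ?_⟩
  · intro i j
    unfold score
    rw [hsum_rw]
    have hs : (∑ p : Fin l × Fin k,
        sgn n l k μ p.1 p.2 * (if i p.1 = j p.2 then (1:ℝ) else 0)) ≤ N :=
      Finset.sum_le_sum (fun p _ => hterm_le i j p)
    have h1 := hA_le (multiIndexRel n l i₁ i)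
    have h2 := hA_le (multiIndexRel n k j₁ j)
    linarith
  · intro i j
    unfold score
    rw [hsum_rw]
    constructor
    · intro heq
      have hS_le : (∑ p : Fin l × Fin k,
          sgn n l k μ p.1 p.2 * (if i p.1 = j p.2 then (1:ℝ) else 0)) ≤ N := by
        rw [hN]; exact Finset.sum_le_sum (fun p _ => hterm_le i j p)
      have h1 := hA_le (multiIndexRel n l i₁ i)
      have h2 := hA_le (multiIndexRel n k j₁ j)
      have hA1 : (if multiIndexRel n l i₁ i then (1:ℝ) else 1 - ε) = 1 := by linarith
      have hA2 : (if multiIndexRel n k j₁ j then (1:ℝ) else 1 - ε) = 1 := by linarith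
      have hS : (∑ p : Fin l × Fin k,
          sgn n l k μ p.1 p.2 * (if i p.1 = j p.2 then (1:ℝ) else 0)) = N := by linarith
      have hreli : multiIndexRel n l i₁ i := (hA_eq _).mp hA1
      have hrelj : multiIndexRel n k j₁ j := (hA_eq _).mp hA2
      have hpat : ∀ (a : Fin l) (b : Fin k), i a = j b ↔ i₁ a = j₁ b := by
        rw [hN] at hS
        have := (Finset.sum_eq_sum_iff_of_le (fun p _ => hterm_le i j p)).mp hS
        intro a b
        exact (hterm_eq i j (a, b)).mp (this (a, b) (Finset.mem_univ _))
      -- construct permutation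
      obtain ⟨πi, hπi⟩ := hreli
      obtain ⟨πj, hπj⟩ := hrelj
      set S : Set (Fin n) := Set.range i ∪ Set.range j with hSdef
      set h : Fin n → Fin n := fun x => if x ∈ Set.range i then πi x else πj x with hh
      have hhi : ∀ a, h (i a) = i₁ a := by
        intro a
        rw [hh]
        simp only [Set.mem_range, exists_apply_eq_apply, if_pos]
        exact (hπi a).symm
      have hhj : ∀ b, h (j b) = j₁ b := by
        intro b
        by_cases hb : j b ∈ Set.range i
        · obtain ⟨a, ha⟩ := hb
          have h1 : h (j b) = πi (j b) := by
            simp only [hh]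
            rw [if_pos ⟨a, ha⟩]
          rw [h1, ← ha, ← hπi a]
          exact (hpat a b).mp ha
        · have h1 : h (j b) = πj (j b) := by
            simp only [hh]
            rw [if_neg hb]
          rw [h1]
          exact (hπj b).symm
      have hinj : Set.InjOn h S := by
        rintro x (⟨a, rfl⟩ | ⟨b, rfl⟩) y (⟨a', rfl⟩ | ⟨b', rfl⟩) hxy
        · rw [hhi, hhi] at hxy
          exact πi.injective (by rw [← hπi, ← hπi, hxy])
        · rw [hhi, hhj] at hxy
          exact (hpat a b').mpr hxy
        · rw [hhj, hhi] at hxy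
          exact ((hpat a' b).mpr hxy.symm).symm
        · rw [hhj, hhj] at hxy
          exact πj.injective (by rw [← hπj, ← hπj, hxy])
      obtain ⟨π, hπ⟩ := exists_perm_extend S h hinj
      rw [hμ]
      refine ⟨π, fun c => ?_⟩
      refine Fin.addCases (fun a => ?_) (fun b => ?_) c
      · rw [Fin.append_left, Fin.append_left, hπ (i a) (Or.inl ⟨a, rfl⟩), hhi]
      · rw [Fin.append_right, Fin.append_right, hπ (j b) (Or.inr ⟨b, rfl⟩), hhj]
    · intro hm
      rw [hμ] at hm
      obtain ⟨π, hπ⟩ := hm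
      have hi : ∀ a, i₁ a = π (i a) := by
        intro a
        have := hπ (Fin.castAdd k a)
        rwa [Fin.append_left, Fin.append_left] at this
      have hj : ∀ b, j₁ b = π (j b) := by
        intro b
        have := hπ (Fin.natAdd l b)
        rwa [Fin.append_right, Fin.append_right] at this
      have hreli : multiIndexRel n l i₁ i := ⟨π, hi⟩
      have hrelj : multiIndexRel n k j₁ j := ⟨π, hj⟩
      rw [if_pos hreli, if_pos hrelj]
      have : (∑ p : Fin l × Fin k,
          sgn n l k μ p.1 p.2 * (if i p.1 = j p.2 then (1:ℝ) else 0)) = N := by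
        rw [hN]
        apply Finset.sum_congr rfl
        intro p _
        apply (hterm_eq i j p).mpr
        constructor
        · intro he; rw [hi, hj, he]
        · intro he; exact π.injective (by rw [← hi, ← hj, he])
      linarith
end

section
/- Any linear map L: ℝ^n → ℝ^n that is permutation equivariant (L(Πx) = ΠL(x) for every n×n permutation matrix Π) must be of the form L(x) = αx + β(𝟏ᵀx)𝟏 for some scalars α, β ∈ ℝ, provided n ≥ 2. -/
/-! The matrix of an equivariant map is invariant under simultaneous permutation of its rows and
columns. The symmetric group acts transitively on the diagonal positions and, being
2-transitive, on the off-diagonal ones, so the matrix has one diagonal value `a` and one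
off-diagonal value `b`, i.e. it is `(a - b) I + b 𝟏𝟏ᵀ`. -/

open Equiv Finset MulAction

lemma exists_forall_eq_of_pairwise_eq {α β : Type*} [Nonempty β] {p : α → Prop} {f : α → β}
    (h : ∀ x y, p x → p y → f x = f y) : ∃ b, ∀ x, p x → f x = b := by
  by_cases hp : ∃ x, p x
  · obtain ⟨x, hx⟩ := hp
    exact ⟨f x, fun y hy => h y x hy hx⟩
  · exact ⟨Classical.arbitrary β, fun x hx => (hp ⟨x, hx⟩).elim⟩

namespace LinearMap

variable {R ι : Type*} [CommRing R] [Fintype ι] [DecidableEq ι] {L : (ι → R) →ₗ[R] (ι → R)}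

theorem toMatrix'_apply_perm (hL : ∀ (σ : Perm ι) (x : ι → R),
      L (fun i => x (σ⁻¹ i)) = fun i => L x (σ⁻¹ i)) (σ : Perm ι) (i j : ι) :
    toMatrix' L (σ i) (σ j) = toMatrix' L i j := by
  have hsingle : (fun k => (Pi.single j 1 : ι → R) (σ⁻¹ k)) = Pi.single (σ j) 1 :=
    Pi.single_comp_equiv σ⁻¹ j 1
  have h := congrFun (hL σ (Pi.single j 1)) (σ i)
  rwa [hsingle, Perm.inv_def, Equiv.symm_apply_apply, ← toMatrix'_apply, ← toMatrix'_apply] at h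

theorem apply_eq_of_toMatrix'_diag_offDiag {a b : R} (ha : ∀ i, toMatrix' L i i = a)
    (hb : ∀ i j, i ≠ j → toMatrix' L i j = b) (x : ι → R) (i : ι) :
    L x i = (a - b) * x i + b * ∑ j, x j := by
  have hM : ∀ j, toMatrix' L i j = (a - b) * (if i = j then 1 else 0) + b := by
    intro j
    by_cases hij : i = j
    · subst hij; simp [ha]
    · simp [hb i j hij, hij]
  calc L x i = ∑ j, toMatrix' L i j * x j := by
        rw [← toMatrix'_mulVec, Matrix.mulVec, dotProduct]
    _ = ∑ j, ((a - b) * (if i = j then x j else 0) + b * x j) := by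
        refine sum_congr rfl fun j _ => ?_
        rw [hM]; split_ifs <;> ring
    _ = (a - b) * x i + b * ∑ j, x j := by
        rw [sum_add_distrib, ← mul_sum, ← mul_sum, sum_ite_eq, if_pos (mem_univ i)]

theorem exists_apply_eq_mul_add_mul_sum_of_perm_equivariant (hL : ∀ (σ : Perm ι) (x : ι → R),
      L (fun i => x (σ⁻¹ i)) = fun i => L x (σ⁻¹ i)) :
    ∃ α β : R, ∀ (x : ι → R) (i : ι), L x i = α * x i + β * ∑ j, x j := by
  obtain ⟨a, ha⟩ := exists_forall_eq_of_pairwise_eq (p := fun _ => True)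
    (f := fun i => toMatrix' L i i) fun i k _ _ => by
      obtain ⟨σ, hσ⟩ := exists_smul_eq (Perm ι) k i
      rw [← hσ, Perm.smul_def, toMatrix'_apply_perm hL]
  obtain ⟨b, hb⟩ := exists_forall_eq_of_pairwise_eq (p := fun ij : ι × ι => ij.1 ≠ ij.2)
    (f := fun ij => toMatrix' L ij.1 ij.2) fun ⟨i, j⟩ ⟨k, l⟩ hij hkl => by
      obtain ⟨σ, hσk, hσl⟩ :=
        is_two_pretransitive_iff.mp (Perm.isMultiplyPretransitive ι 2) hkl hij
      dsimp only at hσk hσl ⊢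
      rw [← hσk, ← hσl, Perm.smul_def, Perm.smul_def, toMatrix'_apply_perm hL]
  exact ⟨a - b, b, apply_eq_of_toMatrix'_diag_offDiag (fun i => ha i trivial)
    fun i j hij => hb (i, j) hij⟩

end LinearMap

theorem equivariant_linear_characterization_general (n : ℕ)
    (L : (Fin n → ℝ) →ₗ[ℝ] (Fin n → ℝ))
    (hL : ∀ (σ : Equiv.Perm (Fin n)) (x : Fin n → ℝ),
      L (fun i => x (σ⁻¹ i)) = fun i => L x (σ⁻¹ i)) :
    ∃ α β : ℝ, ∀ (x : Fin n → ℝ) (i : Fin n),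
      L x i = α * x i + β * ∑ j, x j :=
  LinearMap.exists_apply_eq_mul_add_mul_sum_of_perm_equivariant hL

/-- Any permutation-equivariant linear map `L : ℝ^n → ℝ^n` (with `n ≥ 2`) has
the form `L(x) = α x + β (𝟏ᵀx) 𝟏` for some scalars `α, β`. -/
theorem equivariant_linear_characterization (n : ℕ) (hn : 2 ≤ n)
    (L : (Fin n → ℝ) →ₗ[ℝ] (Fin n → ℝ))
    (hL : ∀ (σ : Equiv.Perm (Fin n)) (x : Fin n → ℝ),
      L (fun i => x (σ⁻¹ i)) = fun i => L x (σ⁻¹ i)) :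
    ∃ α β : ℝ, ∀ (x : Fin n → ℝ) (i : Fin n),
      L x i = α * x i + β * ∑ j, x j :=
  equivariant_linear_characterization_general n L hL
end
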